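/- arXiv:1705.08787 — 2 statements merged into one kernel-verified Lean document; each statement's English description precedes it below -/
import Mathlib

section
/- There is no packing of $K_{3(3)}$ (complete tripartite graph with parts of size 3) by five edge-disjoint copies of $K_4 - e$ whose leave is a path of length 2 (two adjacent edges). -/
open SimpleGraph Finset

/-- `K₄ - e`: the complete graph on `{0,1,2,3}` minus the edge `{2,3}`.
In the block notation `[a,b,c-d]`, `a = 0`, `b = 1`, `c = 2`, `d = 3`. -/
def K4e : SimpleGraph (Fin 4) where
  Adj x y := x ≠ y ∧ ¬(x = 2 ∧ y = 3) ∧ ¬(x = 3 ∧ y = 2)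
  symm := by
    constructor
    intro x y h
    exact ⟨h.1.symm, fun hc => h.2.2 ⟨hc.2, hc.1⟩, fun hc => h.2.1 ⟨hc.2, hc.1⟩⟩
  loopless := ⟨fun x h => h.1 rfl⟩

instance : DecidableRel K4e.Adj :=
  fun x y => inferInstanceAs (Decidable (x ≠ y ∧ ¬(x = 2 ∧ y = 3) ∧ ¬(x = 3 ∧ y = 2)))

/-- The edge set of the copy of `K₄ - e` with vertices `f 0, f 1, f 2, f 3`. -/
def copyEdges {V : Type*} (f : Fin 4 → V) : Set (Sym2 V) :=
  Sym2.map f '' K4e.edgeSet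

/-- `B` is a packing of `H` by edge-disjoint copies of `K₄ - e`. -/
def IsK4ePacking {V : Type*} (H : SimpleGraph V) (B : Finset (Fin 4 → V)) : Prop :=
  (∀ f ∈ B, Function.Injective f) ∧
  (∀ f ∈ B, copyEdges f ⊆ H.edgeSet) ∧
  (∀ f ∈ B, ∀ g ∈ B, f ≠ g → Disjoint (copyEdges f) (copyEdges g))

/-- The leave of a packing: the edges of `H` covered by no copy. -/
def leave {V : Type*} (H : SimpleGraph V) (B : Finset (Fin 4 → V)) : Set (Sym2 V) :=
  H.edgeSet \ ⋃ f ∈ B, copyEdges f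

/-- `B` is a decomposition of `H` into edge-disjoint copies of `K₄ - e`. -/
def IsK4eDecomp {V : Type*} (H : SimpleGraph V) (B : Finset (Fin 4 → V)) : Prop :=
  IsK4ePacking H B ∧ ∀ e ∈ H.edgeSet, ∃ f ∈ B, e ∈ copyEdges f

/-- The complete tripartite graph with parts `{0,3,6}, {1,4,7}, {2,5,8}` on `Fin 9`. -/
def K3x3 : SimpleGraph (Fin 9) where
  Adj x y := x.val % 3 ≠ y.val % 3
  symm := ⟨fun _ _ h => h.symm⟩
  loopless := ⟨fun _ h => h rfl⟩

/-!
The parts of `K_{3(3)}` properly 3-colour every copy of `K₄ - e` in it, so the two vertices of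
degree 3 of a copy lie in two different parts and its two vertices of degree 2 in the third.
Let `y` be the middle vertex of the leave and `P` its part. The 9 edges avoiding `P` are all
covered, and a copy covers one of them if its degree-2 vertices lie in `P` and two otherwise;
with 5 copies, exactly one copy has its degree-2 vertices in `P`. The 4 covered edges at `y`
are covered 3 or 2 at a time, according as `y` has degree 3 or 2 in the copy; as `4 = 3a + 2b`
forces `b = 2`, the vertex `y`, and with it the degree-2 vertices, lie in `P` for two copies.
-/

instance : DecidableRel K3x3.Adj :=
  fun x y => inferInstanceAs (Decidable (x.val % 3 ≠ y.val % 3))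

section Packing

variable {V : Type*}

lemma adj_of_copyEdges_subset {H : SimpleGraph V} {f : Fin 4 → V}
    (hf : copyEdges f ⊆ H.edgeSet) {i j : Fin 4} (hij : K4e.Adj i j) : H.Adj (f i) (f j) :=
  hf ⟨s(i, j), hij, rfl⟩

variable [DecidableEq V]

def copyEdgeFinset (f : Fin 4 → V) : Finset (Sym2 V) :=
  K4e.edgeFinset.image (Sym2.map f)

@[simp]
lemma coe_copyEdgeFinset (f : Fin 4 → V) : (copyEdgeFinset f : Set (Sym2 V)) = copyEdges f := by
  simp [copyEdgeFinset, copyEdges]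

lemma card_filter_copyEdgeFinset {f : Fin 4 → V} (hf : Function.Injective f)
    (p : Sym2 V → Prop) [DecidablePred p] :
    #{e ∈ copyEdgeFinset f | p e} = #{e ∈ K4e.edgeFinset | p (e.map f)} := by
  rw [copyEdgeFinset, filter_image, card_image_of_injective _ (Sym2.map.injective hf)]

lemma card_copyEdgeFinset_filter_mem {f : Fin 4 → V} (hf : Function.Injective f) (y : V) :
    #{e ∈ copyEdgeFinset f | y ∈ e} =
      3 * (if y = f 0 ∨ y = f 1 then 1 else 0) + 2 * (if y = f 2 ∨ y = f 3 then 1 else 0) := by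
  rw [card_filter_copyEdgeFinset hf]
  by_cases hy : ∃ i, f i = y
  · obtain ⟨i, rfl⟩ := hy
    simp only [Sym2.mem_map, hf.eq_iff, exists_eq_right]
    rw [← incidenceFinset_eq_filter, card_incidenceFinset_eq_degree]
    fin_cases i <;> simp <;> decide
  · simp only [not_exists] at hy
    simp [Sym2.mem_map, hy, fun i => Ne.symm (hy i)]

lemma IsK4ePacking.card_filter_edgeFinset {H : SimpleGraph V} [Fintype H.edgeSet]
    {B : Finset (Fin 4 → V)} (hB : IsK4ePacking H B) {L : Finset (Sym2 V)}
    (hL : leave H B = L) (p : Sym2 V → Prop) [DecidablePred p] :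
    #{e ∈ H.edgeFinset | p e} = #{e ∈ L | p e} + ∑ f ∈ B, #{e ∈ copyEdgeFinset f | p e} := by
  have hdisj : (B : Set (Fin 4 → V)).PairwiseDisjoint copyEdgeFinset := fun f hf g hg hfg => by
    simpa [← disjoint_coe] using hB.2.2 f hf g hg hfg
  have hcover : H.edgeFinset = L ∪ B.biUnion copyEdgeFinset := by
    rw [← coe_inj, coe_union, ← hL, coe_biUnion, coe_edgeFinset]
    simp only [coe_copyEdgeFinset, mem_coe, leave]
    rw [Set.sdiff_union_self, Set.union_eq_left.2 (Set.iUnion₂_subset hB.2.1)]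
  have hLB : Disjoint L (B.biUnion copyEdgeFinset) := by
    rw [← disjoint_coe, ← hL, coe_biUnion]
    simp only [coe_copyEdgeFinset, mem_coe, leave]
    exact Set.disjoint_sdiff_left
  rw [hcover, filter_union, card_union_of_disjoint (disjoint_filter_filter hLB), filter_biUnion,
    card_biUnion (hdisj.mono fun f => filter_subset _ _)]

end Packing

lemma K4e_coloring_two_eq_three (C : K4e.Coloring (Fin 3)) : C 2 = C 3 := by
  obtain ⟨c, hc⟩ := C
  revert c
  decide

lemma K4e_card_edges_avoiding_color (C : K4e.Coloring (Fin 3)) (q : Fin 3) :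
    #{e ∈ K4e.edgeFinset | ∀ i ∈ e, C i ≠ q} = if C 2 = q then 1 else 2 := by
  obtain ⟨c, hc⟩ := C
  revert c q
  decide

def part (v : Fin 9) : Fin 3 := ⟨v % 3, Nat.mod_lt _ three_pos⟩

lemma K3x3_adj_iff {v w : Fin 9} : K3x3.Adj v w ↔ part v ≠ part w := by
  simp [K3x3, part, Fin.ext_iff]

lemma K3x3_degree (v : Fin 9) : K3x3.degree v = 6 := by
  revert v
  decide

lemma K3x3_card_edges_avoiding_part (v : Fin 9) :
    #{e ∈ K3x3.edgeFinset | ∀ w ∈ e, part w ≠ part v} = 9 := by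
  revert v
  decide

def partColoring {f : Fin 4 → Fin 9} (hf : copyEdges f ⊆ K3x3.edgeSet) : K4e.Coloring (Fin 3) :=
  Coloring.mk (fun i => part (f i)) fun hij => K3x3_adj_iff.1 (adj_of_copyEdges_subset hf hij)

lemma part_two_eq_part_three {f : Fin 4 → Fin 9} (hf : copyEdges f ⊆ K3x3.edgeSet) :
    part (f 2) = part (f 3) :=
  K4e_coloring_two_eq_three (partColoring hf)

lemma card_copyEdgeFinset_avoiding_part {f : Fin 4 → Fin 9} (hinj : Function.Injective f)
    (hf : copyEdges f ⊆ K3x3.edgeSet) (q : Fin 3) :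
    #{e ∈ copyEdgeFinset f | ∀ w ∈ e, part w ≠ q} = if part (f 2) = q then 1 else 2 := by
  rw [card_filter_copyEdgeFinset hinj]
  simp only [Sym2.mem_map, forall_exists_index, and_imp, forall_apply_eq_imp_iff₂]
  exact K4e_card_edges_avoiding_color (partColoring hf) q

section

variable {B : Finset (Fin 4 → Fin 9)} {L : Finset (Sym2 (Fin 9))} {y : Fin 9}

lemma card_filter_part_two_eq_one (hcard : #B = 5) (hB : IsK4ePacking K3x3 B)
    (hL : leave K3x3 B = L) (hLy : ∀ e ∈ L, y ∈ e) : #{f ∈ B | part (f 2) = part y} = 1 := by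
  have h := hB.card_filter_edgeFinset hL (fun e => ∀ w ∈ e, part w ≠ part y)
  rw [K3x3_card_edges_avoiding_part, filter_false_of_mem fun e he h => h y (hLy e he) rfl,
    card_empty, zero_add, sum_congr rfl fun f hf =>
      card_copyEdgeFinset_avoiding_part (hB.1 f hf) (hB.2.1 f hf) _,
    sum_ite, sum_const, sum_const, smul_eq_mul, smul_eq_mul] at h
  have h_split := card_filter_add_card_filter_not (s := B) fun f => part (f 2) = part y
  omega

lemma three_mul_card_add_two_mul_card_add_card_eq_six (hB : IsK4ePacking K3x3 B)
    (hL : leave K3x3 B = L) (hLy : ∀ e ∈ L, y ∈ e) :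
    3 * #{f ∈ B | y = f 0 ∨ y = f 1} + 2 * #{f ∈ B | y = f 2 ∨ y = f 3} + #L = 6 := by
  have h := hB.card_filter_edgeFinset hL (y ∈ ·)
  rw [← incidenceFinset_eq_filter, card_incidenceFinset_eq_degree, K3x3_degree,
    filter_true_of_mem hLy, sum_congr rfl fun f hf => card_copyEdgeFinset_filter_mem (hB.1 f hf) y,
    sum_add_distrib, ← mul_sum, ← mul_sum, sum_boole, sum_boole] at h
  simp only [Nat.cast_id] at h
  omega

end

theorem stmt7 :
    ¬ ∃ B : Finset (Fin 4 → Fin 9), B.card = 5 ∧ IsK4ePacking K3x3 B ∧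
      ∃ x y z : Fin 9, x ≠ y ∧ y ≠ z ∧ x ≠ z ∧ leave K3x3 B = {s(x, y), s(y, z)} := by
  rintro ⟨B, hcard, hB, x, y, z, hxy, -, hxz, hleave⟩
  set L : Finset (Sym2 (Fin 9)) := {s(x, y), s(y, z)}
  have hL : leave K3x3 B = L := by simp [L, hleave]
  have hLy : ∀ e ∈ L, y ∈ e := by simp [L]
  have hcardL : #L = 2 := card_pair (by simp [hxy, hxz])
  have h_avoid := card_filter_part_two_eq_one hcard hB hL hLy
  have h_at := three_mul_card_add_two_mul_card_add_card_eq_six hB hL hLy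
  have h_pair : #{f ∈ B | y = f 2 ∨ y = f 3} ≤ #{f ∈ B | part (f 2) = part y} :=
    card_le_card fun f hf => by
      simp only [mem_filter] at hf ⊢
      obtain ⟨hfB, rfl | rfl⟩ := hf
      exacts [⟨hfB, rfl⟩, ⟨hfB, part_two_eq_part_three (hB.2.1 f hfB)⟩]
  omega
end

section
/- There is no packing of $K_{3(4)}$ (complete tripartite graph with parts of size 4) by nine edge-disjoint copies of $K_4-e$ whose leave is a path of length 3 on 4 vertices. -/
open SimpleGraph Finset

/-- The complete tripartite graph with parts `{i, i+3, i+6, i+9}`, `0 ≤ i ≤ 2`, on `Fin 12`. -/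
def K3x4 : SimpleGraph (Fin 12) where
  Adj x y := x.val % 3 ≠ y.val % 3
  symm := ⟨fun _ _ h => h.symm⟩
  loopless := ⟨fun _ h => h rfl⟩

namespace Pack


instance : DecidableRel K3x4.Adj := fun x y => inferInstanceAs (Decidable (x.val % 3 ≠ y.val % 3))

def blockFinset (f : Fin 4 → Fin 12) : Finset (Sym2 (Fin 12)) :=
  K4e.edgeFinset.image (Sym2.map f)

lemma copyEdges_eq_coe (f : Fin 4 → Fin 12) : copyEdges f = ↑(blockFinset f) := by
  rw [blockFinset, Finset.coe_image, SimpleGraph.coe_edgeFinset, copyEdges]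

/-- The five adjacency constraints satisfied by any copy of `K₄-e` inside `K3x4`. -/
def Adj5 (f : Fin 4 → Fin 12) : Prop :=
  K3x4.Adj (f 0) (f 1) ∧ K3x4.Adj (f 0) (f 2) ∧ K3x4.Adj (f 0) (f 3) ∧
  K3x4.Adj (f 1) (f 2) ∧ K3x4.Adj (f 1) (f 3)

lemma adj5_of_sub {f : Fin 4 → Fin 12} (hsub : copyEdges f ⊆ K3x4.edgeSet) : Adj5 f := by
  have key : ∀ i j : Fin 4, K4e.Adj i j → K3x4.Adj (f i) (f j) := by
    intro i j hij
    exact (SimpleGraph.mem_edgeSet _).mp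
      (hsub ⟨s(i, j), (SimpleGraph.mem_edgeSet _).mpr hij, Sym2.map_pair_eq f i j⟩)
  exact ⟨key 0 1 (by decide), key 0 2 (by decide), key 0 3 (by decide),
    key 1 2 (by decide), key 1 3 (by decide)⟩

def sw01 : Fin 4 → Fin 4 := fun i => if i = 0 then 1 else if i = 1 then 0 else i
def sw23 : Fin 4 → Fin 4 := fun i => if i = 2 then 3 else if i = 3 then 2 else i
def swb : Fin 4 → Fin 4 := fun i => sw01 (sw23 i)

lemma blockFinset_comp (f : Fin 4 → Fin 12) (τ : Fin 4 → Fin 4)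
    (hτ : K4e.edgeFinset.image (Sym2.map τ) = K4e.edgeFinset) :
    blockFinset (f ∘ τ) = blockFinset f := by
  unfold blockFinset
  conv_rhs => rw [← hτ]
  rw [Finset.image_image]
  congr 1
  funext z
  exact (Sym2.map_map z).symm

def orient (f : Fin 4 → Fin 12) : Fin 4 → Fin 12 :=
  if f 0 < f 1 then
    if f 2 < f 3 then f else f ∘ sw23
  else
    if f 2 < f 3 then f ∘ sw01 else f ∘ swb

lemma orient_spec {f : Fin 4 → Fin 12} (hinj : Function.Injective f) (h5 : Adj5 f) :
    blockFinset (orient f) = blockFinset f ∧ Adj5 (orient f) ∧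
    orient f 0 < orient f 1 ∧ orient f 2 < orient f 3 := by
  obtain ⟨a01, a02, a03, a12, a13⟩ := h5
  have h01 : f 0 ≠ f 1 := a01.ne
  have h23 : f 2 ≠ f 3 := fun h => absurd (hinj h) (by decide)
  unfold orient
  split_ifs with hf01 hf23 hf23
  · exact ⟨rfl, ⟨a01, a02, a03, a12, a13⟩, hf01, hf23⟩
  · have c0 : (f ∘ sw23) 0 = f 0 := rfl
    have c1 : (f ∘ sw23) 1 = f 1 := rfl
    have c2 : (f ∘ sw23) 2 = f 3 := rfl
    have c3 : (f ∘ sw23) 3 = f 2 := rfl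
    refine ⟨blockFinset_comp f sw23 (by decide), ?_, ?_, ?_⟩
    · exact ⟨by rw [c0, c1]; exact a01, by rw [c0, c2]; exact a03, by rw [c0, c3]; exact a02,
        by rw [c1, c2]; exact a13, by rw [c1, c3]; exact a12⟩
    · rw [c0, c1]; exact hf01
    · rw [c2, c3]; exact lt_of_le_of_ne (not_lt.mp hf23) h23.symm
  · have c0 : (f ∘ sw01) 0 = f 1 := rfl
    have c1 : (f ∘ sw01) 1 = f 0 := rfl
    have c2 : (f ∘ sw01) 2 = f 2 := rfl
    have c3 : (f ∘ sw01) 3 = f 3 := rfl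
    refine ⟨blockFinset_comp f sw01 (by decide), ?_, ?_, ?_⟩
    · exact ⟨by rw [c0, c1]; exact a01.symm, by rw [c0, c2]; exact a12, by rw [c0, c3]; exact a13,
        by rw [c1, c2]; exact a02, by rw [c1, c3]; exact a03⟩
    · rw [c0, c1]; exact lt_of_le_of_ne (not_lt.mp hf01) h01.symm
    · rw [c2, c3]; exact hf23
  · have c0 : (f ∘ swb) 0 = f 1 := rfl
    have c1 : (f ∘ swb) 1 = f 0 := rfl
    have c2 : (f ∘ swb) 2 = f 3 := rfl
    have c3 : (f ∘ swb) 3 = f 2 := rfl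
    refine ⟨blockFinset_comp f swb (by decide), ?_, ?_, ?_⟩
    · exact ⟨by rw [c0, c1]; exact a01.symm, by rw [c0, c2]; exact a13, by rw [c0, c3]; exact a12,
        by rw [c1, c2]; exact a03, by rw [c1, c3]; exact a02⟩
    · rw [c0, c1]; exact lt_of_le_of_ne (not_lt.mp hf01) h01.symm
    · rw [c2, c3]; exact lt_of_le_of_ne (not_lt.mp hf23) h23.symm

lemma eta4 (g : Fin 4 → Fin 12) : ![g 0, g 1, g 2, g 3] = g := by
  funext i
  fin_cases i <;> rfl



/-- Certificate-driven exact-cover refutation checker on bitmasks. -/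
def chkM (bl : List Nat) : List Nat → List Nat → Bool
  | _, [] => true
  | [], _ :: _ => false
  | e :: es, t :: ts =>
    decide (e &&& t ≠ 0) &&
    chkM bl es
      (((bl.filter fun b => decide (e &&& b ≠ 0) && decide (b &&& t = b)).map fun b => t ^^^ b)
        ++ ts)

/-- `S` is an exact cover of mask `target` by pairwise disjoint masks from `bl`. -/
def CoversM (bl : List Nat) (target : Nat) (S : List Nat) : Prop :=
  (∀ b ∈ S, b ∈ bl) ∧ S.Nodup ∧ S.Pairwise (fun a b => a &&& b = 0) ∧
    S.foldr (· ||| ·) 0 = target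

lemma land_ne_zero_iff {a b : Nat} :
    a &&& b ≠ 0 ↔ ∃ i, a.testBit i ∧ b.testBit i := by
  constructor
  · intro h
    by_contra hc
    push_neg at hc
    apply h
    apply Nat.eq_of_testBit_eq
    intro i
    rw [Nat.testBit_land, Nat.zero_testBit]
    cases h1 : a.testBit i <;> cases h2 : b.testBit i <;> simp_all
  · rintro ⟨i, h1, h2⟩ h0
    have := congrArg (Nat.testBit · i) h0
    simp [Nat.testBit_land, h1, h2] at this
lemma land_eq_self_iff {a b : Nat} :
    a &&& b = a ↔ ∀ i, a.testBit i → b.testBit i := by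
  constructor
  · intro h i hi
    have := congrArg (Nat.testBit · i) h
    simp only [Nat.testBit_land] at this
    cases h2 : b.testBit i <;> simp_all
  · intro h
    apply Nat.eq_of_testBit_eq
    intro i
    rw [Nat.testBit_land]
    cases h1 : a.testBit i
    · simp
    · simp [h _ h1]

lemma testBit_foldr {S : List Nat} {i : Nat} :
    (S.foldr (· ||| ·) 0).testBit i = true ↔ ∃ b ∈ S, b.testBit i = true := by
  induction S with
  | nil => simp [Nat.zero_testBit]
  | cons a S ih => simp [Nat.testBit_lor, ih]

lemma foldr_eraseM {S : List Nat} (hnd : S.Nodup)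
    (hpw : S.Pairwise (fun a b => a &&& b = 0)) {b : Nat} (hb : b ∈ S) :
    (S.erase b).foldr (· ||| ·) 0 = S.foldr (· ||| ·) 0 ^^^ b := by
  apply Nat.eq_of_testBit_eq
  intro i
  rw [Nat.testBit_xor]
  cases hbi : b.testBit i
  · -- bit not in b : xor is just foldr bit
    rw [Bool.xor_false]
    cases hS : (S.foldr (· ||| ·) 0).testBit i
    · cases h : ((S.erase b).foldr (· ||| ·) 0).testBit i
      · rfl
      · exfalso
        obtain ⟨c, hc, hci⟩ := testBit_foldr.mp h
        have : (S.foldr (· ||| ·) 0).testBit i = true :=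
          testBit_foldr.mpr ⟨c, S.mem_of_mem_erase hc, hci⟩
        rw [hS] at this; exact Bool.false_ne_true this
    · obtain ⟨c, hc, hci⟩ := testBit_foldr.mp hS
      have hcb : c ≠ b := by rintro rfl; rw [hbi] at hci; exact Bool.false_ne_true hci
      exact testBit_foldr.mpr ⟨c, List.mem_erase_of_ne hcb |>.mpr hc, hci⟩
  · -- bit in b
    rw [Bool.xor_true]
    have hS : (S.foldr (· ||| ·) 0).testBit i = true := testBit_foldr.mpr ⟨b, hb, hbi⟩
    rw [hS]
    simp only [Bool.not_true]
    cases h : ((S.erase b).foldr (· ||| ·) 0).testBit i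
    · rfl
    · exfalso
      obtain ⟨c, hc, hci⟩ := testBit_foldr.mp h
      have hcb : c ≠ b := (hnd.mem_erase_iff.mp hc).1
      have hcS := S.mem_of_mem_erase hc
      have hd : b &&& c = 0 :=
        (haveI : Std.Symm fun a b : Nat => a &&& b = 0 := ⟨fun x y h => by rwa [Nat.land_comm]⟩; hpw.forall) hb hcS (fun h => hcb h.symm)
      exact land_ne_zero_iff.mpr ⟨i, hbi, hci⟩ hd

theorem chkM_sound (bl : List Nat) :
    ∀ (es : List Nat) (ts : List Nat), chkM bl es ts = true →
      ∀ t ∈ ts, ¬ ∃ S, CoversM bl t S := by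
  intro es
  induction es with
  | nil =>
    intro ts h t ht
    cases ts with
    | nil => simp at ht
    | cons t' ts => simp [chkM] at h
  | cons e es ih =>
    intro ts h t ht
    cases ts with
    | nil => simp at ht
    | cons t' ts =>
      rw [chkM, Bool.and_eq_true] at h
      obtain ⟨he, hrec⟩ := h
      rcases List.mem_cons.mp ht with rfl | htts
      · rintro ⟨S, hmem, hnd, hpw, hun⟩
        have he' : e &&& t ≠ 0 := of_decide_eq_true he
        obtain ⟨i, hei, hti⟩ := land_ne_zero_iff.mp he'
        obtain ⟨b, hbS, hbi⟩ := testBit_foldr.mp (hun ▸ hti)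
        have hbt : b &&& t = b := land_eq_self_iff.mpr fun j hj =>
          hun ▸ testBit_foldr.mpr ⟨b, hbS, hj⟩
        have hbe : e &&& b ≠ 0 := land_ne_zero_iff.mpr ⟨i, hei, hbi⟩
        have hcand : b ∈ bl.filter fun b => decide (e &&& b ≠ 0) && decide (b &&& t = b) := by
          rw [List.mem_filter]
          exact ⟨hmem b hbS, by simp [hbe, hbt]⟩
        have hchild : t ^^^ b ∈
            ((bl.filter fun b => decide (e &&& b ≠ 0) && decide (b &&& t = b)).map
              fun b => t ^^^ b) ++ ts :=
          List.mem_append_left _ (List.mem_map.mpr ⟨b, hcand, rfl⟩)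
        refine ih _ hrec (t ^^^ b) hchild
          ⟨S.erase b, fun c hc => hmem c (S.mem_of_mem_erase hc), hnd.erase b,
            hpw.sublist (S.erase_sublist (a := b)), ?_⟩
        rw [foldr_eraseM hnd hpw hbS, hun]
      · exact ih _ hrec t (List.mem_append_right _ htts)



instance : Std.Commutative (α := Nat) (· ||| ·) := ⟨fun a b => Nat.lor_comm a b⟩
instance : Std.Associative (α := Nat) (· ||| ·) := ⟨fun a b c => Nat.lor_assoc a b c⟩

variable {α : Type*} [DecidableEq α]

/-- Bitmask of a finite set under a coding function. -/
def cmask (c : α → Nat) (s : Finset α) : Nat := s.fold (· ||| ·) 0 (fun e => 2 ^ c e)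

lemma testBit_cmask {c : α → Nat} {s : Finset α} {i : Nat} :
    (cmask c s).testBit i = true ↔ ∃ e ∈ s, c e = i := by
  classical
  induction s using Finset.induction_on with
  | empty => simp [cmask, Nat.zero_testBit]
  | insert _ _ ha ih =>
    rw [cmask] at ih
    rw [cmask, Finset.fold_insert ha]
    simp [Nat.testBit_lor, Nat.testBit_two_pow, ih]

lemma cmask_union {c : α → Nat} {s t : Finset α} :
    cmask c (s ∪ t) = cmask c s ||| cmask c t := by
  apply Nat.eq_of_testBit_eq
  intro i
  rw [Nat.testBit_lor, Bool.eq_iff_iff]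
  simp only [Bool.or_eq_true, testBit_cmask, Finset.mem_union]
  constructor
  · rintro ⟨e, (he | he), hc⟩
    exacts [Or.inl ⟨e, he, hc⟩, Or.inr ⟨e, he, hc⟩]
  · rintro (⟨e, he, hc⟩ | ⟨e, he, hc⟩)
    exacts [⟨e, Or.inl he, hc⟩, ⟨e, Or.inr he, hc⟩]

lemma cmask_inj {c : α → Nat} (hc : Function.Injective c) {s t : Finset α}
    (h : cmask c s = cmask c t) : s = t := by
  ext e
  constructor <;> intro he
  · have : (cmask c t).testBit (c e) = true := h ▸ testBit_cmask.mpr ⟨e, he, rfl⟩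
    obtain ⟨e', he', hce⟩ := testBit_cmask.mp this
    rwa [← hc hce]
  · have : (cmask c s).testBit (c e) = true := h ▸ testBit_cmask.mpr ⟨e, he, rfl⟩
    obtain ⟨e', he', hce⟩ := testBit_cmask.mp this
    rwa [← hc hce]

lemma cmask_disjoint {c : α → Nat} (hc : Function.Injective c) {s t : Finset α}
    (h : Disjoint s t) : cmask c s &&& cmask c t = 0 := by
  apply Nat.eq_of_testBit_eq
  intro i
  rw [Nat.testBit_land, Nat.zero_testBit]
  cases h1 : (cmask c s).testBit i
  · simp
  · cases h2 : (cmask c t).testBit i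
    · simp
    · exfalso
      obtain ⟨e, he, hce⟩ := testBit_cmask.mp h1
      obtain ⟨e', he', hce'⟩ := testBit_cmask.mp h2
      rw [← hce'] at hce
      rw [hc hce] at he
      exact Finset.disjoint_left.mp h he he'

lemma foldr_map_cmask {c : α → Nat} (L : List (Finset α)) :
    (L.map (cmask c)).foldr (· ||| ·) 0 = cmask c (L.foldr (· ∪ ·) ∅) := by
  classical
  induction L with
  | nil => simp [cmask]
  | cons a L ih => simp [ih, cmask_union]

/-- Edge coding for `Sym2 (Fin 12)`. -/
def ecode : Sym2 (Fin 12) → Nat :=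
  Sym2.lift ⟨fun x y => min x.val y.val * 12 + max x.val y.val, by
    intro x y; simp only []; rw [min_comm, max_comm]⟩

lemma ecode_pair (x y : Fin 12) : ecode s(x, y) = min x.val y.val * 12 + max x.val y.val :=
  rfl

lemma ecode_inj : Function.Injective ecode := by
  intro e e'
  induction e using Sym2.ind with | _ x y =>
  induction e' using Sym2.ind with | _ z w =>
  intro h
  rw [ecode_pair, ecode_pair] at h
  rw [Sym2.eq_iff, Fin.ext_iff, Fin.ext_iff, Fin.ext_iff, Fin.ext_iff]
  have hx := x.isLt; have hy := y.isLt; have hz := z.isLt; have hw := w.isLt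
  omega


def blM : List Nat := [
  134266886,
  2199023419426,
  17592187126018,
  140737496778754,
  1099914280980,
  9010497789624368,
  72076285735600400,
  576602589303408656,
  8798374723716,
  147573963584792690848,
  4951760157141547487875563904,
  39614081257132318330353354880,
  70386058265604,
  1180591693285178737696,
  81129638414606681783749935367424,
  2722258935367507707706997070560378227712,
  1074020358,
  73786976294838599714,
  1208925819614629176017154,
  9671406556917033406302210,
  18014399851659284,
  73813997892602429488,
  1208925909686621722116368,
  9671407151392184210556944,
  604462909807317808578692,
  604684270736199101972640,
  4953573545870943043358556544,
  39624357126598893144756979840,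
  4835703278458534952436740,
  4836957657055528948335648,
  81129644459235779768934878676224,
  2722258935367522214816832235004242168832,
  8592048134,
  590295810358707879970,
  40564819207303340847894505718018,
  664613997892457936451903530150660098,
  144115196934225940,
  590448932746036248624,
  40564819207303557020676616356112,
  664613997892457937172479470519453712,
  9903520314283042209930412164,
  9903521052152805147575058592,
  40579674487774765411193292063104,
  664614047410059507867114526105143424,
  332306998946228968225951790839890948,
  332306998946230739113382841187042336,
  332428693403850878248495448577803520,
  2723255856364346394611674714749355953152,
  1208270848,
  73786978493861888000,
  1208925819632221362094080,
  9671406557057770894688256,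
  18015499497504768,
  73814001191137312768,
  1208925909705313419788288,
  9671407151534021210537984,
  604462909816114035818496,
  604684270747194218250240,
  4953573545870969431637622784,
  39624357126599042678338355200,
  4835703278528903830831104,
  4836957657128096715767808,
  81129644459235779856895808897024,
  2722258935367522214816832446110474698752,
  8726298624,
  590295812557731168256,
  40564819207303340865486691794944,
  664613997892457936452044267639046144,
  144116296580071424,
  590448936044571131904,
  40564819207303557039368314028032,
  664613997892457937172621307519434752,
  9903520314283051006157651968,
  9903521052152816142691336192,
  40579674487774765437581571129344,
  664614047410059507867264059686518784,
  332306998946228968226022159718285312,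
  332306998946230739113455408954474496,
  332428693403850878248583409508024320,
  2723255856364346394611674925855588483072,
  9666052096,
  664082786653546348544,
  40564820416229160462523680686080,
  664613997902129343008820563548569600,
  162129596517449728,
  664253923439383937024,
  40564820416229394649704300544000,
  664613997902129343747410902426583040,
  9904124777192849525591506944,
  9904125588849588757000617984,
  40579676301163494833137054121984,
  664614047420335377333838874090143744,
  332306998951064671504410308612456448,
  332306998951066516178817652724072448,
  332428693409895507346568594451333120,
  2723255856364360901721510090299452424192,
  268451862,
  9007199254872114,
  72057594038976786,
  576460752311814162,
  1099914330112,
  9010497789788160,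
  72076285736681472,
  576602589311827968,
  18014399851937792,
  73813997892602822656,
  1208925909686621723426816,
  9671407151392184219205632,
  144115196936339456,
  590448932746038476800,
  40564819207303557020676619501568,
  664613997892457937172479470529937408,
  2147500166,
  147573952589676544162,
  4951760157141521099597545858,
  39614081257132168796780365954,
  8798374772736,
  147573963584792854528,
  4951760157141547487876644864,
  39614081257132318330361774080,
  604462909807317808857088,
  604684270736199102365696,
  4953573545870943043359866880,
  39624357126598893144765628416,
  9903520314283042209932525568,
  9903521052152805147577286656,
  40579674487774765411193295208448,
  664614047410059507867114526115627008,
  17179886598,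
  1180591620717411435554,
  81129638414606681695789006193922,
  2722258935367507707706996859454154083330,
  70386058313728,
  1180591693285178900480,
  81129638414606681783749936447488,
  2722258935367507707706997070560386646016,
  4835703278458534952714240,
  4836957657055528948727808,
  81129644459235779768934879985664,
  2722258935367522214816832235004250816512,
  332306998946228968225951790842003456,
  332306998946230739113382841189269504,
  332428693403850878248495448580947968,
  2723255856364346394611674714749366435840,
  2415919252,
  147582959788931154096,
  4951760157213578693634425232,
  39614081257708629549075400848,
  9898154786816,
  147582971883559059456,
  4951760157213606181425119232,
  39614081257708780182168403968,
  604462927821716586496000,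
  604684297757796866195456,
  4953573545961015035905966080,
  39624357127193368295569883136,
  9903520314427157398274703360,
  9903521052305927534905655296,
  40579674487774981583975405846528,
  664614047410059508587690466484420608,
  17448305684,
  1180600627916666045488,
  81129638414606753753383043073296,
  2722258935367507707707573320206449118224,
  71485838327808,
  1180600701583945105408,
  81129638414606753842443484921856,
  2722258935367507707707573532412193275904,
  4835703296472933730353152,
  4836957684077126712557568,
  81129644459235869840927426084864,
  2722258935367522214817426710155055071232,
  332306998946228968370066979184181248,
  332306998946230739266505228517638144,
  332428693403850878464668230691586048,
  2723255856364346394612395290689735229440,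
  19327353988,
  1328165573307087717536,
  81134590174763823216888601642368,
  2722258935407121788964129028250917670016,
  79184298770432,
  1328165654670948171776,
  81134590174763823313645624885248,
  2722258935407121788964129248153243222016,
  5440166188265851687272448,
  5441568140815433212100608,
  81134596823855831097349062524928,
  2722258935407136900536874211115601494016,
  332307008849749282508993992180367360,
  332307008849751200970377630056448000,
  332428708259131349673058747367292928,
  2723255856413863996183089925745320919040,
  147494,
  9007199523176500,
  147573952591823896740,
  1180591620734591173668,
  2199157653504,
  9010498192277504,
  147573963587074392064,
  1180591693302492823552,
  73786976295912357888,
  73813997893944606720,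
  604684270736202323197952,
  4836957657055547201945600,
  590295810367297830912,
  590448932754894618624,
  9903521052152805158312476672,
  332306998946230739113382866956845056,
  1065222,
  72057594306363668,
  4951760157141521101743980932,
  81129638414606681695806185014532,
  17592321359872,
  72076286138253312,
  4951760157141547490157264896,
  81129638414606681783767249453056,
  1208925819614630249775104,
  1208925909686623064293376,
  4953573545870943046579781632,
  81129644459235779768953132285952,
  40564819207303340847903095668736,
  40564819207303557020685474725888,
  40579674487774765411204029480960,
  332428693403850878248495474347606016,
  8407046,
  576460752571861012,
  39614081257132168798919460996,
  2722258935367507707706996859471325563908,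
  140737631010816,
  576602589706059776,
  39614081257132318332635054080,
  2722258935367507707706997070577692311552,
  9671406556917034480058368,
  9671407151392185552732160,
  39624357126598893147978203136,
  2722258935367522214816832235022495776768,
  664613997892457936451903538740609024,
  664613997892457937172479479377821696,
  664614047410059507867114536842559488,
  2723255856364346394611674714775125753856,
  1179938,
  81064793292669232,
  4951760304715473689272910240,
  81129638415787273316506416448800,
  19791210512384,
  81085684013596672,
  4951760304715502276575232000,
  81129638415787273406666369925120,
  1208999606590924014354432,
  1208999705670115815063552,
  4953573767231871927873175552,
  81129644460490158365947128184832,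
  40564819207893636658253211500544,
  40564819207893861838234576748544,
  40579674488512635174141674127360,
  332428693403852649135926524694757376,
  8521762,
  585467951558166576,
  39614081404706121386448390304,
  2722258935367507708887588480171556998176,
  142936520163328,
  585611987581403136,
  39614081404706273119053021184,
  2722258935367507708887588693476812783616,
  9671480343893328244637696,
  9671480947375678303502336,
  39624357347959822029271597056,
  2722258935367522216071210832016491675648,
  664613997892458526747713888856440832,
  664613997892458527477297028479844352,
  664614047410060245736877474487205888,
  2723255856364346396382562145825472905216,
  9439490,
  648518346341353744,
  44565841414273689896368474496,
  2722259016497146122313678555243150839040,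
  158329683869696,
  648677775527378944,
  44565841414273857022135894016,
  2722259016497146122313678783941569413120,
  10880332376531662582054912,
  10880333043064407423188992,
  44577326209560028873528180736,
  2722259016497161838349333545422422016000,
  664654562711665239792751424654278656,
  664654562711665240585384959059951616,
  664654617181026968349483520204210176,
  2723255978058804016521697258432863666176
]
def cert1 : List Nat := [
  16384, 131072, 131072, 1048576, 1048576, 1048576,
  8388608, 1048576, 131072, 1048576, 1048576, 1048576,
  8388608, 1048576, 131072, 1048576, 1048576, 1048576,
  8388608, 1048576, 131072, 1048576, 1048576, 1048576,
  8388608, 1048576, 131072, 1048576, 1048576, 1048576,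
  8388608, 1048576, 131072, 1048576, 1048576, 1048576,
  8388608, 1048576, 1048576, 8388608, 8388608, 8388608,
  18014398509481984, 576460752303423488, 72057594037927936, 4835703278458516698824704, 256, 17592186044416,
  1208925819614629174706176, 2048, 140737488355328, 604462909807314587353088, 256, 17592186044416,
  604462909807314587353088, 2048, 140737488355328, 604462909807314587353088, 1048576, 8388608,
  8388608, 8388608, 18014398509481984, 9007199254740992, 268435456, 73786976294838206464,
  4, 134217728, 1073741824, 32, 2199023255552, 73786976294838206464,
  4, 134217728, 1073741824, 32, 2199023255552, 604462909807314587353088,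
  131072, 8388608, 8388608, 8388608, 18014398509481984, 576460752303423488,
  9007199254740992, 4835703278458516698824704, 32, 2199023255552, 73786976294838206464, 2048,
  140737488355328, 604462909807314587353088, 32, 2199023255552, 73786976294838206464, 2048,
  140737488355328, 604462909807314587353088, 131072, 8388608, 8388608, 8388608,
  18014398509481984, 72057594037927936, 268435456, 1208925819614629174706176, 4, 134217728,
  1073741824, 256, 17592186044416, 604462909807314587353088, 4, 134217728,
  1073741824, 256, 17592186044416, 604462909807314587353088, 131072, 1048576,
  1048576, 1048576, 18014398509481984, 72057594037927936, 9007199254740992, 1208925819614629174706176,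
  32, 2199023255552, 73786976294838206464, 256, 17592186044416, 604462909807314587353088,
  32, 2199023255552, 73786976294838206464, 256, 17592186044416, 604462909807314587353088,
  131072, 1048576, 1048576, 1048576, 18014398509481984, 576460752303423488,
  268435456, 4835703278458516698824704, 4, 134217728, 1073741824, 2048,
  140737488355328, 604462909807314587353088, 4, 134217728, 1073741824, 2048,
  140737488355328, 604462909807314587353088
]
def tgt1 : Nat := 2723255978113289700741887042838037155252
def cert2 : List Nat := [
  4, 2147483648, 590295810358705651712, 9007199254740992, 72057594037927936, 40564819207303340847894502572032,
  1048576, 1099511627776, 32, 128, 1208925819614629174706176, 128,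
  4835703278458516698824704, 32, 1024, 604462909807314587353088, 256, 604462909807314587353088,
  40564819207303340847894502572032, 144115188075855872, 32768, 2097152, 1099511627776, 1099511627776,
  2048, 128, 73786976294838206464, 32, 1208925819614629174706176, 2048,
  256, 73786976294838206464, 32, 604462909807314587353088, 144115188075855872, 32768,
  2097152, 1099511627776, 1099511627776, 256, 128, 73786976294838206464,
  32, 4835703278458516698824704, 256, 1024, 73786976294838206464, 32,
  604462909807314587353088, 17179869184, 17179869184, 17179869184, 268435456, 590295810358705651712,
  147573952589676412928, 4951760157141521099596496896, 40564819207303340847894502572032, 1048576, 8796093022208, 32,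
  16, 72057594037927936, 16, 576460752303423488, 32, 1024,
  18014398509481984, 256, 18014398509481984, 40564819207303340847894502572032, 9903520314283042199192993792, 32768,
  2097152, 8796093022208, 8796093022208, 2048, 16, 9007199254740992,
  16, 72057594037927936, 2048, 256, 18014398509481984, 32,
  18014398509481984, 9903520314283042199192993792, 32768, 2097152, 8796093022208, 8796093022208,
  256, 16, 9007199254740992, 16, 576460752303423488, 256,
  1024, 18014398509481984, 32, 18014398509481984, 17179869184, 17179869184,
  17179869184, 268435456, 590295810358705651712, 1180591620717411303424, 81129638414606681695789005144064, 40564819207303340847894502572032,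
  1048576, 70368744177664, 32, 16, 72057594037927936, 16,
  576460752303423488, 32, 128, 18014398509481984, 128, 18014398509481984,
  40564819207303340847894502572032, 332306998946228968225951765070086144, 32768, 2097152, 70368744177664, 70368744177664,
  2048, 16, 9007199254740992, 16, 72057594037927936, 2048,
  128, 18014398509481984, 32, 18014398509481984, 40564819207303340847894502572032, 32768,
  2097152, 70368744177664, 70368744177664, 256, 16, 9007199254740992,
  16, 576460752303423488, 256, 128, 18014398509481984, 32,
  18014398509481984, 2147483648, 2147483648, 2147483648, 2147483648, 73786976294838206464,
  9007199254740992, 72057594037927936, 1208925819614629174706176, 1048576, 1099511627776, 32,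
  128, 4951760157141521099596496896, 128, 39614081257132168796771975168, 32, 1024,
  9903520314283042199192993792, 256, 9903520314283042199192993792, 1208925819614629174706176, 18014398509481984, 32768,
  262144, 1099511627776, 1099511627776, 2048, 128, 147573952589676412928,
  32, 4951760157141521099596496896, 2048, 256, 590295810358705651712, 32,
  9903520314283042199192993792, 18014398509481984, 32768, 262144, 1099511627776, 1099511627776,
  256, 128, 147573952589676412928, 32, 39614081257132168796771975168, 256,
  1024, 590295810358705651712, 32, 9903520314283042199192993792, 17179869184, 17179869184,
  17179869184, 268435456, 73786976294838206464, 147573952589676412928, 4951760157141521099596496896, 1208925819614629174706176,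
  1048576, 8796093022208, 32, 16, 72057594037927936, 16,
  576460752303423488, 32, 1024, 144115188075855872, 256, 144115188075855872,
  1208925819614629174706176, 604462909807314587353088, 32768, 262144, 8796093022208, 8796093022208,
  2048, 16, 9007199254740992, 16, 72057594037927936, 2048,
  256, 144115188075855872, 32, 144115188075855872, 604462909807314587353088, 32768,
  262144, 8796093022208, 8796093022208, 256, 16, 9007199254740992,
  16, 576460752303423488, 256, 1024, 144115188075855872, 32,
  144115188075855872, 17179869184, 17179869184, 17179869184, 268435456, 73786976294838206464,
  1180591620717411303424, 81129638414606681695789005144064, 1208925819614629174706176, 1048576, 70368744177664, 32,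
  16, 72057594037927936, 16, 576460752303423488, 32, 128,
  144115188075855872, 128, 144115188075855872, 1208925819614629174706176, 4835703278458516698824704, 32768,
  262144, 70368744177664, 70368744177664, 2048, 16, 9007199254740992,
  16, 72057594037927936, 2048, 128, 144115188075855872, 32,
  144115188075855872, 1208925819614629174706176, 32768, 262144, 70368744177664, 70368744177664,
  256, 16, 9007199254740992, 16, 576460752303423488, 256,
  128, 144115188075855872, 32, 144115188075855872, 2147483648, 2147483648,
  2147483648, 1073741824, 32, 256, 2048, 256,
  32, 256, 2048, 1073741824, 32, 256,
  2048, 256, 32, 256, 2048, 1073741824,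
  32, 256, 2048, 256, 32, 256,
  2048, 128, 1024, 1099511627776, 1073741824, 17179869184,
  262144, 18014398509481984, 8589934592, 70368744177664, 70368744177664, 590295810358705651712,
  8589934592, 17179869184, 2097152, 72057594037927936, 1073741824, 70368744177664,
  70368744177664, 73786976294838206464, 256, 1099511627776, 1073741824, 17179869184,
  262144, 18014398509481984, 8589934592, 70368744177664, 70368744177664, 590295810358705651712,
  8589934592, 17179869184, 2097152, 144115188075855872, 1073741824, 70368744177664,
  70368744177664, 73786976294838206464, 1024, 1073741824, 2147483648, 262144,
  18014398509481984, 2147483648, 8796093022208, 8796093022208, 590295810358705651712, 1073741824,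
  1073741824, 2147483648, 131072, 2097152, 262144, 256,
  1073741824, 2147483648, 262144, 18014398509481984, 2147483648, 8796093022208,
  8796093022208, 590295810358705651712, 1073741824, 1073741824, 2147483648, 131072,
  262144, 2097152, 1024, 8589934592, 2147483648, 2097152,
  144115188075855872, 1073741824, 8796093022208, 8796093022208, 73786976294838206464, 1073741824,
  8589934592, 131072, 262144, 2097152, 8589934592, 256,
  8589934592, 2147483648, 2097152, 72057594037927936, 1073741824, 8796093022208,
  8796093022208, 73786976294838206464, 1073741824, 8589934592, 131072, 2097152,
  262144, 8589934592, 2048, 256, 1024, 16,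
  1024, 8796093022208, 1073741824, 17179869184, 262144, 604462909807314587353088,
  8589934592, 70368744177664, 70368744177664, 590295810358705651712, 8589934592, 17179869184,
  2097152, 4951760157141521099596496896, 1073741824, 70368744177664, 70368744177664, 73786976294838206464,
  256, 8796093022208, 1073741824, 17179869184, 262144, 604462909807314587353088,
  8589934592, 70368744177664, 70368744177664, 590295810358705651712, 8589934592, 17179869184,
  2097152, 9903520314283042199192993792, 1073741824, 70368744177664, 70368744177664, 73786976294838206464,
  1024, 1073741824, 268435456, 262144, 576460752303423488, 268435456,
  1099511627776, 1099511627776, 590295810358705651712, 1073741824, 268435456, 1073741824,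
  131072, 2097152, 262144, 256, 1073741824, 268435456,
  262144, 72057594037927936, 268435456, 1099511627776, 1099511627776, 590295810358705651712,
  1073741824, 268435456, 1073741824, 131072, 262144, 2097152,
  1024, 8589934592, 268435456, 2097152, 576460752303423488, 268435456,
  1099511627776, 1099511627776, 73786976294838206464, 268435456, 8589934592, 131072,
  262144, 2097152, 8589934592, 256, 8589934592, 268435456,
  2097152, 72057594037927936, 268435456, 1099511627776, 1099511627776, 73786976294838206464,
  268435456, 8589934592, 131072, 2097152, 262144, 8589934592,
  2048, 256, 1024, 16, 128, 70368744177664,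
  1073741824, 2147483648, 262144, 4835703278458516698824704, 2147483648, 8796093022208,
  8796093022208, 590295810358705651712, 8589934592, 2147483648, 2097152, 4951760157141521099596496896,
  1073741824, 8796093022208, 8796093022208, 73786976294838206464, 128, 70368744177664,
  1073741824, 2147483648, 262144, 4835703278458516698824704, 2147483648, 8796093022208,
  8796093022208, 590295810358705651712, 8589934592, 2147483648, 2097152, 39614081257132168796771975168,
  1073741824, 8796093022208, 8796093022208, 73786976294838206464, 128, 1073741824,
  268435456, 262144, 576460752303423488, 268435456, 1099511627776, 1099511627776,
  590295810358705651712, 1073741824, 268435456, 1073741824, 131072, 2097152,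
  262144, 128, 1073741824, 268435456, 262144, 72057594037927936,
  268435456, 1099511627776, 1099511627776, 590295810358705651712, 1073741824, 268435456,
  1073741824, 131072, 262144, 2097152, 128, 8589934592,
  268435456, 2097152, 576460752303423488, 268435456, 1099511627776, 1099511627776,
  73786976294838206464, 268435456, 2147483648, 131072, 262144, 2097152,
  8589934592, 128, 8589934592, 268435456, 2097152, 72057594037927936,
  268435456, 1099511627776, 1099511627776, 73786976294838206464, 268435456, 2147483648,
  131072, 2097152, 262144, 8589934592, 2048, 256,
  128, 32, 1024, 1099511627776, 1073741824, 17179869184,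
  262144, 9007199254740992, 8589934592, 70368744177664, 40564819207303340847894502572032, 70368744177664,
  8589934592, 17179869184, 2097152, 9007199254740992, 1073741824, 70368744177664,
  1208925819614629174706176, 70368744177664, 128, 1099511627776, 1073741824, 2147483648,
  262144, 9007199254740992, 2147483648, 8796093022208, 40564819207303340847894502572032, 8796093022208,
  8589934592, 2147483648, 2097152, 9007199254740992, 1073741824, 8796093022208,
  1208925819614629174706176, 8796093022208, 1024, 1073741824, 2147483648, 262144,
  18014398509481984, 2147483648, 8796093022208, 8796093022208, 40564819207303340847894502572032, 1073741824,
  1073741824, 2147483648, 262144, 1048576, 8796093022208, 128,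
  1073741824, 17179869184, 262144, 18014398509481984, 8589934592, 70368744177664,
  70368744177664, 40564819207303340847894502572032, 1073741824, 1073741824, 8589934592, 262144,
  1048576, 70368744177664, 1024, 8589934592, 2147483648, 2097152,
  144115188075855872, 1073741824, 8796093022208, 8796093022208, 1208925819614629174706176, 1073741824,
  8589934592, 262144, 1048576, 2199023255552, 8589934592, 128,
  8589934592, 17179869184, 2097152, 144115188075855872, 1073741824, 70368744177664,
  70368744177664, 1208925819614629174706176, 1073741824, 2147483648, 262144, 1048576,
  2199023255552, 8589934592, 2048, 1024, 128, 16,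
  1024, 8796093022208, 1073741824, 17179869184, 262144, 147573952589676412928,
  8589934592, 70368744177664, 40564819207303340847894502572032, 70368744177664, 8589934592, 17179869184,
  2097152, 147573952589676412928, 1073741824, 70368744177664, 1208925819614629174706176, 70368744177664,
  32, 8796093022208, 1073741824, 17179869184, 262144, 604462909807314587353088,
  8589934592, 70368744177664, 70368744177664, 40564819207303340847894502572032, 8589934592, 17179869184,
  2097152, 9903520314283042199192993792, 1073741824, 70368744177664, 70368744177664, 1208925819614629174706176,
  1024, 1073741824, 268435456, 262144, 576460752303423488, 268435456,
  1099511627776, 1099511627776, 40564819207303340847894502572032, 1073741824, 268435456, 1073741824,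
  262144, 1048576, 1099511627776, 32, 1073741824, 268435456,
  262144, 9007199254740992, 268435456, 1099511627776, 40564819207303340847894502572032, 1099511627776,
  1073741824, 268435456, 1073741824, 262144, 1048576, 1099511627776,
  1024, 8589934592, 268435456, 2097152, 576460752303423488, 268435456,
  1099511627776, 1099511627776, 1208925819614629174706176, 268435456, 8589934592, 262144,
  1048576, 2199023255552, 8589934592, 32, 8589934592, 268435456,
  2097152, 9007199254740992, 268435456, 1099511627776, 1208925819614629174706176, 1099511627776,
  268435456, 8589934592, 262144, 1048576, 70368744177664, 8589934592,
  2048, 32, 1024, 16, 128, 70368744177664,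
  1073741824, 2147483648, 262144, 147573952589676412928, 2147483648, 8796093022208,
  40564819207303340847894502572032, 8796093022208, 8589934592, 2147483648, 2097152, 147573952589676412928,
  1073741824, 8796093022208, 1208925819614629174706176, 8796093022208, 32, 70368744177664,
  1073741824, 2147483648, 262144, 4835703278458516698824704, 2147483648, 8796093022208,
  8796093022208, 40564819207303340847894502572032, 8589934592, 2147483648, 2097152, 39614081257132168796771975168,
  1073741824, 8796093022208, 8796093022208, 1208925819614629174706176, 128, 1073741824,
  268435456, 262144, 576460752303423488, 268435456, 1099511627776, 1099511627776,
  40564819207303340847894502572032, 1073741824, 268435456, 1073741824, 262144, 1048576,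
  1099511627776, 32, 1073741824, 268435456, 262144, 9007199254740992,
  268435456, 1099511627776, 40564819207303340847894502572032, 1099511627776, 1073741824, 268435456,
  1073741824, 262144, 1048576, 1099511627776, 128, 8589934592,
  268435456, 2097152, 576460752303423488, 268435456, 1099511627776, 1099511627776,
  1208925819614629174706176, 268435456, 2147483648, 262144, 1048576, 2199023255552,
  8589934592, 32, 8589934592, 268435456, 2097152, 9007199254740992,
  268435456, 1099511627776, 1208925819614629174706176, 1099511627776, 268435456, 2147483648,
  262144, 1048576, 8796093022208, 8589934592, 2048, 32,
  128, 32, 256, 1099511627776, 1073741824, 17179869184,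
  262144, 9007199254740992, 8589934592, 70368744177664, 664613997892457936451903530140172288, 70368744177664,
  8589934592, 17179869184, 2097152, 9007199254740992, 1073741824, 70368744177664,
  9671406556917033397649408, 70368744177664, 128, 1099511627776, 1073741824, 2147483648,
  262144, 9007199254740992, 2147483648, 8796093022208, 664613997892457936451903530140172288, 8796093022208,
  8589934592, 2147483648, 2097152, 9007199254740992, 1073741824, 8796093022208,
  9671406556917033397649408, 8796093022208, 256, 1073741824, 2147483648, 262144,
  18014398509481984, 2147483648, 8796093022208, 664613997892457936451903530140172288, 8796093022208, 1073741824,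
  1073741824, 2147483648, 262144, 8388608, 8796093022208, 128,
  1073741824, 17179869184, 262144, 18014398509481984, 8589934592, 70368744177664,
  664613997892457936451903530140172288, 70368744177664, 1073741824, 1073741824, 8589934592, 262144,
  8388608, 17592186044416, 256, 8589934592, 2147483648, 2097152,
  72057594037927936, 1073741824, 8796093022208, 9671406556917033397649408, 8796093022208, 1073741824,
  8589934592, 262144, 8388608, 2199023255552, 8589934592, 128,
  8589934592, 17179869184, 2097152, 72057594037927936, 1073741824, 70368744177664,
  9671406556917033397649408, 70368744177664, 1073741824, 2147483648, 262144, 8388608,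
  2199023255552, 8589934592, 256, 1024, 128, 16,
  256, 8796093022208, 1073741824, 17179869184, 262144, 147573952589676412928,
  8589934592, 70368744177664, 664613997892457936451903530140172288, 70368744177664, 8589934592, 17179869184,
  2097152, 147573952589676412928, 1073741824, 70368744177664, 9671406556917033397649408, 70368744177664,
  32, 8796093022208, 1073741824, 17179869184, 262144, 604462909807314587353088,
  8589934592, 70368744177664, 664613997892457936451903530140172288, 70368744177664, 8589934592, 17179869184,
  2097152, 4951760157141521099596496896, 1073741824, 70368744177664, 9671406556917033397649408, 70368744177664,
  256, 1073741824, 268435456, 262144, 72057594037927936, 268435456,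
  1099511627776, 664613997892457936451903530140172288, 1099511627776, 1073741824, 268435456, 1073741824,
  262144, 8388608, 1099511627776, 32, 1073741824, 268435456,
  262144, 9007199254740992, 268435456, 1099511627776, 664613997892457936451903530140172288, 1099511627776,
  1073741824, 268435456, 1073741824, 262144, 8388608, 1099511627776,
  256, 8589934592, 268435456, 2097152, 72057594037927936, 268435456,
  1099511627776, 9671406556917033397649408, 1099511627776, 268435456, 8589934592, 262144,
  8388608, 2199023255552, 8589934592, 32, 8589934592, 268435456,
  2097152, 9007199254740992, 268435456, 1099511627776, 9671406556917033397649408, 1099511627776,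
  268435456, 8589934592, 262144, 8388608, 17592186044416, 8589934592,
  256, 32, 1024, 16, 128, 70368744177664,
  1073741824, 2147483648, 262144, 147573952589676412928, 2147483648, 8796093022208,
  664613997892457936451903530140172288, 8796093022208, 8589934592, 2147483648, 2097152, 147573952589676412928,
  1073741824, 8796093022208, 9671406556917033397649408, 8796093022208, 32, 70368744177664,
  1073741824, 2147483648, 262144, 4835703278458516698824704, 2147483648, 8796093022208,
  664613997892457936451903530140172288, 8796093022208, 8589934592, 2147483648, 2097152, 4951760157141521099596496896,
  1073741824, 8796093022208, 9671406556917033397649408, 8796093022208, 128, 1073741824,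
  268435456, 262144, 72057594037927936, 268435456, 1099511627776, 664613997892457936451903530140172288,
  1099511627776, 1073741824, 268435456, 1073741824, 262144, 8388608,
  1099511627776, 32, 1073741824, 268435456, 262144, 9007199254740992,
  268435456, 1099511627776, 664613997892457936451903530140172288, 1099511627776, 1073741824, 268435456,
  1073741824, 262144, 8388608, 1099511627776, 128, 8589934592,
  268435456, 2097152, 72057594037927936, 268435456, 1099511627776, 9671406556917033397649408,
  1099511627776, 268435456, 2147483648, 262144, 8388608, 2199023255552,
  8589934592, 32, 8589934592, 268435456, 2097152, 9007199254740992,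
  268435456, 1099511627776, 9671406556917033397649408, 1099511627776, 268435456, 2147483648,
  262144, 8388608, 8796093022208, 8589934592, 256, 32,
  128
]
def tgt2 : Nat := 2723255978113289700741887043937414581684
def cert3 : List Nat := [
  16384, 131072, 131072, 1048576, 1048576, 1048576,
  8388608, 1048576, 131072, 1048576, 1048576, 1048576,
  8388608, 1048576, 131072, 1048576, 1048576, 1048576,
  8388608, 1048576, 131072, 1048576, 1048576, 1048576,
  8388608, 1048576, 131072, 1048576, 1048576, 1048576,
  8388608, 1048576, 131072, 1048576, 1048576, 1048576,
  8388608, 1048576, 1048576, 8388608, 8388608, 8388608,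
  144115188075855872, 2147483648, 268435456, 9903520314283042199192993792, 268435456, 4,
  18014398509481984, 128, 2048, 1024, 2048, 18014398509481984,
  128, 256, 1024, 256, 590295810358705651712, 4,
  4, 9007199254740992, 2048, 128, 9007199254740992, 256,
  128, 8589934592, 32, 590295810358705651712, 4, 4,
  9007199254740992, 2048, 1024, 9007199254740992, 256, 1024,
  8589934592, 32, 9903520314283042199192993792, 1048576, 8388608, 8388608,
  8388608, 18014398509481984, 2147483648, 268435456, 604462909807314587353088, 268435456,
  4, 144115188075855872, 128, 2048, 1024, 2048,
  72057594037927936, 128, 256, 1024, 256, 73786976294838206464,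
  4, 4, 9007199254740992, 2048, 128, 9007199254740992,
  256, 128, 1073741824, 32, 73786976294838206464, 4,
  4, 9007199254740992, 2048, 1024, 9007199254740992, 256,
  1024, 1073741824, 32, 604462909807314587353088, 131072, 8388608,
  8388608, 8388608, 144115188075855872, 2147483648, 268435456, 9903520314283042199192993792,
  268435456, 4, 18014398509481984, 128, 2048, 1024,
  2048, 9007199254740992, 128, 32, 1024, 32,
  40564819207303340847894502572032, 4, 4, 72057594037927936, 2048, 128,
  72057594037927936, 32, 128, 8589934592, 256, 9903520314283042199192993792,
  4, 4, 72057594037927936, 2048, 1024, 72057594037927936,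
  32, 1024, 8589934592, 256, 9903520314283042199192993792, 131072,
  8388608, 8388608, 8388608, 18014398509481984, 2147483648, 268435456,
  604462909807314587353088, 268435456, 4, 144115188075855872, 128, 2048,
  1024, 2048, 9007199254740992, 128, 32, 1024,
  32, 1208925819614629174706176, 4, 4, 72057594037927936, 2048,
  128, 72057594037927936, 32, 128, 1073741824, 256,
  604462909807314587353088, 4, 4, 72057594037927936, 2048, 1024,
  72057594037927936, 32, 1024, 1073741824, 256, 604462909807314587353088,
  131072, 1048576, 1048576, 1048576, 144115188075855872, 2147483648,
  268435456, 9903520314283042199192993792, 268435456, 4, 18014398509481984, 128,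
  256, 1024, 256, 9007199254740992, 128, 32,
  1024, 32, 332306998946228968225951765070086144, 4, 4, 576460752303423488,
  256, 128, 576460752303423488, 32, 128, 8589934592,
  2048, 9903520314283042199192993792, 4, 4, 576460752303423488, 256,
  1024, 576460752303423488, 32, 1024, 8589934592, 2048,
  9903520314283042199192993792, 131072, 1048576, 1048576, 1048576, 18014398509481984,
  2147483648, 268435456, 604462909807314587353088, 268435456, 4, 72057594037927936,
  128, 256, 1024, 256, 9007199254740992, 128,
  32, 1024, 32, 4835703278458516698824704, 4, 4,
  576460752303423488, 256, 128, 576460752303423488, 32, 128,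
  1073741824, 2048, 604462909807314587353088, 4, 4, 576460752303423488,
  256, 1024, 576460752303423488, 32, 1024, 1073741824,
  2048, 604462909807314587353088
]
def tgt3 : Nat := 2723255978113289700741887043937414565300

lemma mask_ne_zero {f : Fin 4 → Fin 12} :
    cmask ecode (blockFinset f) ≠ 0 := by
  intro h0
  have hmem : s(f 0, f 1) ∈ blockFinset f :=
    Finset.mem_image.mpr ⟨s((0 : Fin 4), 1), by decide, Sym2.map_pair_eq f 0 1⟩
  have := (testBit_cmask (c := ecode) (s := blockFinset f) (i := ecode s(f 0, f 1))).mpr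
    ⟨s(f 0, f 1), hmem, rfl⟩
  rw [h0, Nat.zero_testBit] at this
  exact Bool.false_ne_true this

lemma coe_foldr_union (g : (Fin 4 → Fin 12) → Finset (Sym2 (Fin 12))) :
    ∀ l : List (Fin 4 → Fin 12), (∀ f ∈ l, copyEdges f = ↑(g f)) →
      ↑((l.map g).foldr (· ∪ ·) ∅) = ⋃ f ∈ l, copyEdges f := by
  intro l
  induction l with
  | nil => simp
  | cons a l ih =>
    intro h
    simp only [List.map_cons, List.foldr_cons, Finset.coe_union,
      ih fun f hf => h f (List.mem_cons_of_mem a hf)]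
    rw [← h a (List.mem_cons_self (a := a) (l := l))]
    ext e
    simp only [Set.mem_union, Set.mem_iUnion, List.mem_cons, exists_prop]
    constructor
    · rintro (he | ⟨f, hf, he⟩)
      exacts [⟨a, Or.inl rfl, he⟩, ⟨f, Or.inr hf, he⟩]
    · rintro ⟨f, (rfl | hf), he⟩
      exacts [Or.inl he, Or.inr ⟨f, hf, he⟩]

/-- Generic canonical-leave refutation: if the certificate checks out for the target mask
corresponding to leave `L`, then there is no packing with leave `↑L`. -/
theorem noPackCanon (L : Finset (Sym2 (Fin 12))) (tgt : Nat) (cert : List Nat)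
    (hblm : ∀ a b c d : Fin 12, a < b → c < d →
      K3x4.Adj a b → K3x4.Adj a c → K3x4.Adj a d → K3x4.Adj b c → K3x4.Adj b d →
      cmask ecode (blockFinset ![a, b, c, d]) ∈ blM)
    (hchk : chkM blM cert [tgt] = true)
    (htgt : cmask ecode (K3x4.edgeFinset \ L) = tgt)
    (Bs : Finset (Fin 4 → Fin 12)) (hpack : IsK4ePacking K3x4 Bs)
    (hleave : leave K3x4 Bs = ↑L) : False := by
  obtain ⟨hinj, hsub, hdisj⟩ := hpack
  -- main per-copy facts
  have horient : ∀ f ∈ Bs, blockFinset (orient f) = blockFinset f ∧ Adj5 (orient f) ∧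
      orient f 0 < orient f 1 ∧ orient f 2 < orient f 3 := fun f hf =>
    orient_spec (hinj f hf) (adj5_of_sub (hsub f hf))
  have hcopy : ∀ f ∈ Bs, copyEdges f = ↑(blockFinset (orient f)) := by
    intro f hf
    rw [(horient f hf).1, copyEdges_eq_coe]
  set m : (Fin 4 → Fin 12) → Nat := fun f => cmask ecode (blockFinset (orient f)) with hm
  have hmaskmem : ∀ f ∈ Bs, m f ∈ blM := by
    intro f hf
    obtain ⟨-, ⟨a01, a02, a03, a12, a13⟩, ho1, ho2⟩ := horient f hf
    have := hblm (orient f 0) (orient f 1) (orient f 2) (orient f 3) ho1 ho2 a01 a02 a03 a12 a13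
    rwa [eta4 (orient f)] at this
  have hmaskdisj : ∀ f ∈ Bs, ∀ g ∈ Bs, f ≠ g → m f &&& m g = 0 := by
    intro f hf g hg hfg
    apply cmask_disjoint ecode_inj
    rw [← Finset.disjoint_coe, ← hcopy f hf, ← hcopy g hg]
    exact hdisj f hf g hg hfg
  have hland : ∀ n : Nat, n &&& n = n := fun n =>
    Nat.eq_of_testBit_eq fun i => by rw [Nat.testBit_land, Bool.and_self]
  have hmaskne : ∀ f ∈ Bs, ∀ g ∈ Bs, f ≠ g → m f ≠ m g := by
    intro f hf g hg hfg he
    have h0 := hmaskdisj f hf g hg hfg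
    rw [← he, hland] at h0
    exact mask_ne_zero h0
  -- the list of masks
  set SM : List Nat := Bs.toList.map m with hSM
  have hpairs : Bs.toList.Pairwise (· ≠ ·) := Bs.nodup_toList
  have hmemtl : ∀ f ∈ Bs.toList, f ∈ Bs := fun f hf => Finset.mem_toList.mp hf
  refine chkM_sound blM cert [tgt] hchk tgt (List.mem_singleton.mpr rfl) ⟨SM, ?_, ?_, ?_, ?_⟩
  · -- membership
    intro b hb
    obtain ⟨f, hf, rfl⟩ := List.mem_map.mp hb
    exact hmaskmem f (hmemtl f hf)
  · -- nodup
    show (Bs.toList.map m).Pairwise (· ≠ ·)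
    exact List.pairwise_map.mpr (hpairs.imp_of_mem fun ha hb h =>
      hmaskne _ (hmemtl _ ha) _ (hmemtl _ hb) h)
  · -- pairwise disjoint masks
    exact List.pairwise_map.mpr (hpairs.imp_of_mem fun ha hb h =>
      hmaskdisj _ (hmemtl _ ha) _ (hmemtl _ hb) h)
  · -- exact cover
    rw [hSM]
    have hcomp : Bs.toList.map m
        = (Bs.toList.map (fun f => blockFinset (orient f))).map (cmask ecode) := by
      rw [List.map_map]; rfl
    rw [hcomp, foldr_map_cmask, ← htgt]
    congr 1
    apply Finset.coe_injective
    rw [coe_foldr_union _ _ (fun f hf => hcopy f (hmemtl f hf))]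
    have hU : (⋃ f ∈ Bs.toList, copyEdges f) = ⋃ f ∈ Bs, copyEdges f := by
      ext e; simp [Finset.mem_toList]
    have hsubU : (⋃ f ∈ Bs, copyEdges f) ⊆ K3x4.edgeSet := by
      intro e he
      simp only [Set.mem_iUnion] at he
      obtain ⟨f, hf, he⟩ := he
      exact hsub f hf he
    rw [hU, Finset.coe_sdiff, SimpleGraph.coe_edgeFinset, ← hleave, leave,
      Set.diff_diff_cancel_left hsubU]



section Transport
variable {σ : Fin 12 → Fin 12}

lemma map_edgeSet (hinj : Function.Injective σ)
    (hadj : ∀ x y, K3x4.Adj (σ x) (σ y) ↔ K3x4.Adj x y) :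
    Sym2.map σ '' K3x4.edgeSet = K3x4.edgeSet := by
  have hsurj : Function.Surjective σ := Finite.surjective_of_injective hinj
  ext e
  constructor
  · rintro ⟨e', he', rfl⟩
    induction e' using Sym2.ind with | _ x y =>
    rw [SimpleGraph.mem_edgeSet] at he'
    rw [Sym2.map_pair_eq, SimpleGraph.mem_edgeSet]
    exact (hadj x y).mpr he'
  · intro he
    induction e using Sym2.ind with | _ u v =>
    obtain ⟨x, rfl⟩ := hsurj u
    obtain ⟨y, rfl⟩ := hsurj v
    rw [SimpleGraph.mem_edgeSet] at he
    exact ⟨s(x, y), (K3x4.mem_edgeSet).mpr ((hadj x y).mp he), Sym2.map_pair_eq σ x y⟩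

lemma copyEdges_comp (f : Fin 4 → Fin 12) :
    copyEdges (σ ∘ f) = Sym2.map σ '' copyEdges f := by
  have h : Sym2.map (σ ∘ f) = Sym2.map σ ∘ Sym2.map f := by
    funext z; exact (Sym2.map_map z).symm
  rw [copyEdges, copyEdges, h, Set.image_comp]

lemma transport (hinj : Function.Injective σ)
    (hadj : ∀ x y, K3x4.Adj (σ x) (σ y) ↔ K3x4.Adj x y)
    (B : Finset (Fin 4 → Fin 12)) (hpack : IsK4ePacking K3x4 B) :
    IsK4ePacking K3x4 (B.image (σ ∘ ·)) ∧
      leave K3x4 (B.image (σ ∘ ·)) = Sym2.map σ '' leave K3x4 B := by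
  obtain ⟨hi, hs, hd⟩ := hpack
  have hS2 : Function.Injective (Sym2.map σ) := Sym2.map.injective hinj
  constructor
  · refine ⟨?_, ?_, ?_⟩
    · intro g hg
      obtain ⟨f, hf, rfl⟩ := Finset.mem_image.mp hg
      exact Function.Injective.comp hinj (hi f hf)
    · intro g hg
      obtain ⟨f, hf, rfl⟩ := Finset.mem_image.mp hg
      rw [copyEdges_comp]
      calc Sym2.map σ '' copyEdges f ⊆ Sym2.map σ '' K3x4.edgeSet :=
            Set.image_mono (hs f hf)
        _ = K3x4.edgeSet := map_edgeSet hinj hadj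
    · intro g hg g' hg' hne
      obtain ⟨f, hf, rfl⟩ := Finset.mem_image.mp hg
      obtain ⟨f', hf', rfl⟩ := Finset.mem_image.mp hg'
      have : f ≠ f' := fun h => hne (by rw [h])
      rw [copyEdges_comp, copyEdges_comp, Set.disjoint_image_iff hS2]
      exact hd f hf f' hf' this
  · rw [leave, leave]
    have hU : (⋃ g ∈ B.image (σ ∘ ·), copyEdges g) = ⋃ f ∈ B, copyEdges (σ ∘ f) := by
      ext e
      simp only [Set.mem_iUnion, Finset.mem_image, exists_prop]
      constructor
      · rintro ⟨g, ⟨f, hf, rfl⟩, he⟩; exact ⟨f, hf, he⟩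
      · rintro ⟨f, hf, he⟩; exact ⟨σ ∘ f, ⟨f, hf, rfl⟩, he⟩
    rw [hU]
    have hU2 : (⋃ f ∈ B, copyEdges (σ ∘ f)) = Sym2.map σ '' ⋃ f ∈ B, copyEdges f := by
      rw [Set.image_iUnion]
      refine Set.iUnion_congr fun f => ?_
      rw [Set.image_iUnion]
      exact Set.iUnion_congr fun hf => copyEdges_comp f
    rw [hU2]
    conv_lhs => rw [← map_edgeSet hinj hadj]
    rw [← Set.image_diff hS2]

end Transport

section Perm
variable {α : Type*} [DecidableEq α]

def perm2 (r1 r2 s1 s2 : α) : Equiv.Perm α :=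
  (Equiv.swap r1 s1).trans (Equiv.swap ((Equiv.swap r1 s1) r2) s2)

lemma perm2_fst {r1 r2 s1 s2 : α} (h12 : r1 ≠ r2) (hs : s1 ≠ s2) :
    perm2 r1 r2 s1 s2 r1 = s1 := by
  rw [perm2, Equiv.trans_apply, Equiv.swap_apply_left]
  apply Equiv.swap_apply_of_ne_of_ne _ hs
  intro h
  exact h12 ((Equiv.swap r1 s1).injective (by rw [Equiv.swap_apply_left]; exact h))

lemma perm2_snd (r1 r2 s1 s2 : α) : perm2 r1 r2 s1 s2 r2 = s2 := by
  rw [perm2, Equiv.trans_apply, Equiv.swap_apply_left]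

end Perm

def pt (v : Fin 12) : Fin 3 := ⟨v.val % 3, Nat.mod_lt _ (by norm_num)⟩
def rw' (v : Fin 12) : Fin 4 := ⟨v.val / 3, by omega⟩

def build (π : Equiv.Perm (Fin 3)) (ρ : Fin 3 → Equiv.Perm (Fin 4)) (v : Fin 12) : Fin 12 :=
  ⟨(π (pt v)).val + 3 * (ρ (pt v) (rw' v)).val, by
    have h1 := (π (pt v)).isLt
    have h2 := (ρ (pt v) (rw' v)).isLt
    omega⟩

lemma build_val (π : Equiv.Perm (Fin 3)) (ρ : Fin 3 → Equiv.Perm (Fin 4)) (v : Fin 12) :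
    (build π ρ v).val = (π (pt v)).val + 3 * (ρ (pt v) (rw' v)).val := rfl

lemma build_inj (π : Equiv.Perm (Fin 3)) (ρ : Fin 3 → Equiv.Perm (Fin 4)) :
    Function.Injective (build π ρ) := by
  intro v w h
  have hval := congrArg Fin.val h
  rw [build_val, build_val] at hval
  have h1 := (π (pt v)).isLt
  have h2 := (π (pt w)).isLt
  have hp : π (pt v) = π (pt w) := Fin.ext (by omega)
  have hpp : pt v = pt w := π.injective hp
  have hr : ρ (pt v) (rw' v) = ρ (pt w) (rw' w) := by
    rw [← hpp] at hval ⊢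
    exact Fin.ext (by omega)
  rw [← hpp] at hr
  have hrr : rw' v = rw' w := (ρ (pt v)).injective hr
  have e1 : v.val % 3 = w.val % 3 := congrArg Fin.val hpp
  have e2 : v.val / 3 = w.val / 3 := congrArg Fin.val hrr
  exact Fin.ext (by omega)

lemma build_adj (π : Equiv.Perm (Fin 3)) (ρ : Fin 3 → Equiv.Perm (Fin 4)) (x y : Fin 12) :
    K3x4.Adj (build π ρ x) (build π ρ y) ↔ K3x4.Adj x y := by
  show (build π ρ x).val % 3 ≠ (build π ρ y).val % 3 ↔ x.val % 3 ≠ y.val % 3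
  have h1 := (π (pt x)).isLt
  have h2 := (π (pt y)).isLt
  have e1 : (build π ρ x).val % 3 = (π (pt x)).val := by rw [build_val]; omega
  have e2 : (build π ρ y).val % 3 = (π (pt y)).val := by rw [build_val]; omega
  rw [e1, e2]
  constructor
  · intro h hxy
    have : pt x = pt y := Fin.ext hxy
    exact h (by rw [this])
  · intro h hπ
    have : π (pt x) = π (pt y) := Fin.ext hπ
    have := π.injective this
    exact h (congrArg Fin.val this)

lemma pt_ne_of_adj {x y : Fin 12} (h : K3x4.Adj x y) : pt x ≠ pt y :=
  fun hp => h (congrArg Fin.val hp)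

lemma rw_ne {x y : Fin 12} (hp : pt x = pt y) (hne : x ≠ y) : rw' x ≠ rw' y := by
  intro hr
  have e1 : x.val % 3 = y.val % 3 := congrArg Fin.val hp
  have e2 : x.val / 3 = y.val / 3 := congrArg Fin.val hr
  exact hne (Fin.ext (by omega))

lemma fin3_eq_two {x : Fin 3} (h0 : x ≠ 0) (h1 : x ≠ 1) : x = 2 := by
  fin_cases x <;> simp_all

lemma fin3_third {x a b c : Fin 3} (hab : a ≠ b) (hbc : b ≠ c) (hac : a ≠ c)
    (hxb : x ≠ b) (hxc : x ≠ c) : x = a := by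
  fin_cases x <;> fin_cases a <;> fin_cases b <;> fin_cases c <;> simp_all



def rho3 (p1 p2 : Fin 3) (e1 e2 e3 : Equiv.Perm (Fin 4)) : Fin 3 → Equiv.Perm (Fin 4) :=
  fun p => if p = p1 then e1 else if p = p2 then e2 else e3

lemma rho3_1 {p p1 p2 : Fin 3} {e1 e2 e3 : Equiv.Perm (Fin 4)} (h : p = p1) :
    rho3 p1 p2 e1 e2 e3 p = e1 := by rw [rho3, if_pos h]
lemma rho3_2 {p p1 p2 : Fin 3} {e1 e2 e3 : Equiv.Perm (Fin 4)} (h1 : p ≠ p1) (h : p = p2) :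
    rho3 p1 p2 e1 e2 e3 p = e2 := by rw [rho3, if_neg h1, if_pos h]
lemma rho3_3 {p p1 p2 : Fin 3} {e1 e2 e3 : Equiv.Perm (Fin 4)} (h1 : p ≠ p1) (h2 : p ≠ p2) :
    rho3 p1 p2 e1 e2 e3 p = e3 := by rw [rho3, if_neg h1, if_neg h2]

def L1 : Finset (Sym2 (Fin 12)) := {s(0,1), s(1,3), s(3,4)}
def L2 : Finset (Sym2 (Fin 12)) := {s(0,1), s(1,3), s(3,2)}
def L3 : Finset (Sym2 (Fin 12)) := {s(0,1), s(1,2), s(2,3)}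

set_option maxRecDepth 1000000 in
set_option maxHeartbeats 16000000 in
theorem mem_blM : ∀ a b c d : Fin 12, a < b → c < d →
    K3x4.Adj a b → K3x4.Adj a c → K3x4.Adj a d → K3x4.Adj b c → K3x4.Adj b d →
    cmask ecode (blockFinset ![a,b,c,d]) ∈ blM := by decide

set_option maxRecDepth 1000000 in
set_option maxHeartbeats 16000000 in
theorem chk1 : chkM blM cert1 [tgt1] = true := by decide
set_option maxRecDepth 1000000 in
set_option maxHeartbeats 16000000 in
theorem chk2 : chkM blM cert2 [tgt2] = true := by decide
set_option maxRecDepth 1000000 in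
set_option maxHeartbeats 16000000 in
theorem chk3 : chkM blM cert3 [tgt3] = true := by decide

set_option maxRecDepth 1000000 in
set_option maxHeartbeats 16000000 in
theorem htgt1 : cmask ecode (K3x4.edgeFinset \ L1) = tgt1 := by decide
set_option maxRecDepth 1000000 in
set_option maxHeartbeats 16000000 in
theorem htgt2 : cmask ecode (K3x4.edgeFinset \ L3) = tgt2 := by decide
set_option maxRecDepth 1000000 in
set_option maxHeartbeats 16000000 in
theorem htgt3 : cmask ecode (K3x4.edgeFinset \ L2) = tgt3 := by decide

theorem noPackL1 (Bs : Finset (Fin 4 → Fin 12)) (hpack : IsK4ePacking K3x4 Bs)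
    (hleave : leave K3x4 Bs = ↑L1) : False :=
  noPackCanon L1 tgt1 cert1 mem_blM chk1 htgt1 Bs hpack hleave
theorem noPackL2 (Bs : Finset (Fin 4 → Fin 12)) (hpack : IsK4ePacking K3x4 Bs)
    (hleave : leave K3x4 Bs = ↑L2) : False :=
  noPackCanon L2 tgt3 cert3 mem_blM chk3 htgt3 Bs hpack hleave
theorem noPackL3 (Bs : Finset (Fin 4 → Fin 12)) (hpack : IsK4ePacking K3x4 Bs)
    (hleave : leave K3x4 Bs = ↑L3) : False :=
  noPackCanon L3 tgt2 cert2 mem_blM chk2 htgt2 Bs hpack hleave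

lemma case1 {a b c d : Fin 12} (B : Finset (Fin 4 → Fin 12)) (hpack : IsK4ePacking K3x4 B)
    (hab : K3x4.Adj a b) (hac : a ≠ c) (hbd : b ≠ d)
    (h1 : pt a = pt c) (h2 : pt b = pt d)
    (hleave : leave K3x4 B = {s(a, b), s(b, c), s(c, d)}) : False := by
  have hpab : pt a ≠ pt b := pt_ne_of_adj hab
  have hrac : rw' a ≠ rw' c := rw_ne h1 hac
  have hrbd : rw' b ≠ rw' d := rw_ne h2 hbd
  set π : Equiv.Perm (Fin 3) := perm2 (pt a) (pt b) 0 1 with hπdef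
  set ρ : Fin 3 → Equiv.Perm (Fin 4) :=
    rho3 (pt a) (pt b) (perm2 (rw' a) (rw' c) 0 1) (perm2 (rw' b) (rw' d) 0 1) 1 with hρdef
  have hπa : π (pt a) = 0 := perm2_fst hpab (by decide)
  have hπb : π (pt b) = 1 := perm2_snd _ _ _ _
  have hρa : ρ (pt a) = perm2 (rw' a) (rw' c) 0 1 := rho3_1 rfl
  have hρb : ρ (pt b) = perm2 (rw' b) (rw' d) 0 1 := rho3_2 hpab.symm rfl
  have hσa : build π ρ a = 0 := Fin.ext (by rw [build_val, hπa, hρa, perm2_fst hrac (by decide)] <;> decide)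
  have hσb : build π ρ b = 1 := Fin.ext (by rw [build_val, hπb, hρb, perm2_fst hrbd (by decide)] <;> decide)
  have hσc : build π ρ c = 3 := Fin.ext (by
    rw [build_val, ← h1, hπa, hρa, perm2_snd] <;> decide)
  have hσd : build π ρ d = 4 := Fin.ext (by
    rw [build_val, ← h2, hπb, hρb, perm2_snd] <;> decide)
  obtain ⟨hpack', hleave'⟩ := transport (build_inj π ρ) (build_adj π ρ) B hpack
  apply noPackL1 _ hpack'
  rw [hleave', hleave, Set.image_insert_eq, Set.image_insert_eq, Set.image_singleton,
    Sym2.map_pair_eq, Sym2.map_pair_eq, Sym2.map_pair_eq, hσa, hσb, hσc, hσd]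
  simp [L1]

lemma case2 {a b c d : Fin 12} (B : Finset (Fin 4 → Fin 12)) (hpack : IsK4ePacking K3x4 B)
    (hab : K3x4.Adj a b) (hcd : K3x4.Adj c d) (hac : a ≠ c)
    (h1 : pt a = pt c) (h2 : pt b ≠ pt d)
    (hleave : leave K3x4 B = {s(a, b), s(b, c), s(c, d)}) : False := by
  have hpab : pt a ≠ pt b := pt_ne_of_adj hab
  have hpcd : pt c ≠ pt d := pt_ne_of_adj hcd
  have hpda : pt d ≠ pt a := fun h => hpcd (h1.symm.trans h.symm)
  have hrac : rw' a ≠ rw' c := rw_ne h1 hac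
  set π : Equiv.Perm (Fin 3) := perm2 (pt a) (pt b) 0 1 with hπdef
  set ρ : Fin 3 → Equiv.Perm (Fin 4) :=
    rho3 (pt a) (pt b) (perm2 (rw' a) (rw' c) 0 1) (Equiv.swap (rw' b) 0)
      (Equiv.swap (rw' d) 0) with hρdef
  have hπa : π (pt a) = 0 := perm2_fst hpab (by decide)
  have hπb : π (pt b) = 1 := perm2_snd _ _ _ _
  have hπd : π (pt d) = 2 := by
    apply fin3_eq_two
    · rw [← hπa]; exact fun h => hpda (π.injective h)
    · rw [← hπb]; exact fun h => h2 (π.injective h).symm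
  have hρa : ρ (pt a) = perm2 (rw' a) (rw' c) 0 1 := rho3_1 rfl
  have hρb : ρ (pt b) = Equiv.swap (rw' b) 0 := rho3_2 hpab.symm rfl
  have hρd : ρ (pt d) = Equiv.swap (rw' d) 0 := rho3_3 hpda (fun h => h2 h.symm)
  have hσa : build π ρ a = 0 := Fin.ext (by rw [build_val, hπa, hρa, perm2_fst hrac (by decide)] <;> decide)
  have hσb : build π ρ b = 1 := Fin.ext (by rw [build_val, hπb, hρb, Equiv.swap_apply_left] <;> decide)
  have hσc : build π ρ c = 3 := Fin.ext (by rw [build_val, ← h1, hπa, hρa, perm2_snd] <;> decide)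
  have hσd : build π ρ d = 2 := Fin.ext (by rw [build_val, hπd, hρd, Equiv.swap_apply_left] <;> decide)
  obtain ⟨hpack', hleave'⟩ := transport (build_inj π ρ) (build_adj π ρ) B hpack
  apply noPackL2 _ hpack'
  rw [hleave', hleave, Set.image_insert_eq, Set.image_insert_eq, Set.image_singleton,
    Sym2.map_pair_eq, Sym2.map_pair_eq, Sym2.map_pair_eq, hσa, hσb, hσc, hσd]
  simp [L2]

lemma case3 {a b c d : Fin 12} (B : Finset (Fin 4 → Fin 12)) (hpack : IsK4ePacking K3x4 B)
    (hab : K3x4.Adj a b) (hbc : K3x4.Adj b c) (had : a ≠ d)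
    (hpc : pt a ≠ pt c) (hpd : pt d = pt a)
    (hleave : leave K3x4 B = {s(a, b), s(b, c), s(c, d)}) : False := by
  have hpab : pt a ≠ pt b := pt_ne_of_adj hab
  have hpbc : pt b ≠ pt c := pt_ne_of_adj hbc
  have hrad : rw' a ≠ rw' d := rw_ne hpd.symm had
  set π : Equiv.Perm (Fin 3) := perm2 (pt a) (pt b) 0 1 with hπdef
  set ρ : Fin 3 → Equiv.Perm (Fin 4) :=
    rho3 (pt a) (pt b) (perm2 (rw' a) (rw' d) 0 1) (Equiv.swap (rw' b) 0)
      (Equiv.swap (rw' c) 0) with hρdef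
  have hπa : π (pt a) = 0 := perm2_fst hpab (by decide)
  have hπb : π (pt b) = 1 := perm2_snd _ _ _ _
  have hπc : π (pt c) = 2 := by
    apply fin3_eq_two
    · rw [← hπa]; exact fun h => hpc (π.injective h).symm
    · rw [← hπb]; exact fun h => hpbc (π.injective h).symm
  have hρa : ρ (pt a) = perm2 (rw' a) (rw' d) 0 1 := rho3_1 rfl
  have hρb : ρ (pt b) = Equiv.swap (rw' b) 0 := rho3_2 hpab.symm rfl
  have hρc : ρ (pt c) = Equiv.swap (rw' c) 0 :=
    rho3_3 (fun h => hpc h.symm) (fun h => hpbc h.symm)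
  have hσa : build π ρ a = 0 := Fin.ext (by rw [build_val, hπa, hρa, perm2_fst hrad (by decide)] <;> decide)
  have hσb : build π ρ b = 1 := Fin.ext (by rw [build_val, hπb, hρb, Equiv.swap_apply_left] <;> decide)
  have hσc : build π ρ c = 2 := Fin.ext (by rw [build_val, hπc, hρc, Equiv.swap_apply_left] <;> decide)
  have hσd : build π ρ d = 3 := Fin.ext (by rw [build_val, hpd, hπa, hρa, perm2_snd] <;> decide)
  obtain ⟨hpack', hleave'⟩ := transport (build_inj π ρ) (build_adj π ρ) B hpack
  apply noPackL3 _ hpack'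
  rw [hleave', hleave, Set.image_insert_eq, Set.image_insert_eq, Set.image_singleton,
    Sym2.map_pair_eq, Sym2.map_pair_eq, Sym2.map_pair_eq, hσa, hσb, hσc, hσd]
  simp [L3]

end Pack

theorem stmt9 :
    ¬ ∃ B : Finset (Fin 4 → Fin 12), B.card = 9 ∧ IsK4ePacking K3x4 B ∧
      ∃ a b c d : Fin 12, a ≠ b ∧ a ≠ c ∧ a ≠ d ∧ b ≠ c ∧ b ≠ d ∧ c ≠ d ∧
        leave K3x4 B = {s(a, b), s(b, c), s(c, d)} := by
  rintro ⟨B, -, hpack, a, b, c, d, hab, hac, had, hbc, hbd, hcd, hleave⟩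
  have hedge : ∀ e ∈ leave K3x4 B, e ∈ K3x4.edgeSet := fun e he => he.1
  have hAab : K3x4.Adj a b := by
    have := hedge s(a, b) (by rw [hleave]; exact Set.mem_insert _ _)
    rwa [SimpleGraph.mem_edgeSet] at this
  have hAbc : K3x4.Adj b c := by
    have := hedge s(b, c) (by rw [hleave]; exact Set.mem_insert_of_mem _ (Set.mem_insert _ _))
    rwa [SimpleGraph.mem_edgeSet] at this
  have hAcd : K3x4.Adj c d := by
    have := hedge s(c, d)
      (by rw [hleave]; exact Set.mem_insert_of_mem _ (Set.mem_insert_of_mem _ rfl))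
    rwa [SimpleGraph.mem_edgeSet] at this
  by_cases h1 : Pack.pt a = Pack.pt c
  · by_cases h2 : Pack.pt b = Pack.pt d
    · exact Pack.case1 B hpack hAab hac hbd h1 h2 hleave
    · exact Pack.case2 B hpack hAab hAcd hac h1 h2 hleave
  · have hrev : leave K3x4 B = {s(d, c), s(c, b), s(b, a)} := by
      rw [hleave]
      ext e
      simp only [Set.mem_insert_iff, Set.mem_singleton_iff, Sym2.eq_swap (a := d) (b := c),
        Sym2.eq_swap (a := c) (b := b), Sym2.eq_swap (a := b) (b := a)]
      tauto
    by_cases h2 : Pack.pt b = Pack.pt d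
    · exact Pack.case2 B hpack hAcd.symm hAab.symm hbd.symm h2.symm
        (fun h => h1 h.symm) hrev
    · have hpd : Pack.pt d = Pack.pt a :=
        Pack.fin3_third (Pack.pt_ne_of_adj hAab) (Pack.pt_ne_of_adj hAbc) h1
          (fun h => h2 h.symm) (Pack.pt_ne_of_adj hAcd).symm
      exact Pack.case3 B hpack hAab hAbc had h1 hpd hleave
end
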